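/- Let N ≥ 1 and let M be a ℂ-vector space endowed with endomorphisms ∂_{i,k} and ω_{i,k} (1 ≤ i ≤ N, k ∈ ℤ) satisfying [∂_{i,k}, ∂_{j,l}] = 0, [ω_{i,k}, ω_{j,l}] = 0, and [∂_{i,k}, ω_{j,l}] = k δ_{ij} δ_{k+l,0} id_M for all i, j, k, l. Let M_0 ⊆ M be a subspace with ∂_{i,k} M_0 = 0 and ω_{i,k} M_0 = 0 for all i and all k > 0, and suppose M is spanned by the vectors obtained by applying finitely many of the operators ∂_{i,−n}, ω_{i,−n} (n > 0) to elements of M_0. If N' ⊆ M is a nonzero subspace with ∂_{i,k} N' ⊆ N' and ω_{i,k} N' ⊆ N' for all i and all k ∈ ℤ, then N' ∩ M_0 ≠ 0. (This is the statement that every nonzero submodule of a filtered module over the algebra of twisted chiral differential operators on a chiralization-suitable affine chart meets the generating subspace M_0 nontrivially.) -/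

import Mathlib

/-!
For a level bound `w` put `E = ∑ᵢ ∑_{0 < n ≤ w} n⁻¹ (ω_{i,-n} ∂_{i,n} + ∂_{i,-n} ω_{i,n})`.
The Heisenberg relations give `[E, f] = f` for every creation mode `f = ∂_{i,-n}, ω_{i,-n}` with
`n ≤ w`, and `E` kills `M₀`, so `E` acts by `m` on words of `m` such modes applied to `M₀`.
Since eigenspaces of distinct eigenvalues are independent, a combination of such words that `E`
kills lies in `M₀`.

Annihilation modes `∂_{i,n}, ω_{i,n}` (`n > 0`) kill `M₀` and have scalar commutators with the
creation modes, so they shorten words. Starting from `0 ≠ v ∈ N'`, keep applying an annihilation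
mode of level `≤ w` that does not kill the current vector. After at most the word length of `v`
steps this gives a nonzero vector of `N'` killed by all of them, hence by `E`, hence in `M₀`.
-/

namespace HeisenbergFock

variable {K M : Type*} [Field K] [AddCommGroup M] [Module K M]

section WordFiltration

variable (S : Set (Module.End K M)) (M0 : Submodule K M)

/-- The span of the vectors `f₁ (f₂ (⋯ (fₘ x)))` with `m ≤ j`, `fᵢ ∈ S` and `x ∈ M0`. -/
def wordFiltration : ℕ → Submodule K M
  | 0 => M0
  | j + 1 => wordFiltration j ⊔ ⨆ f ∈ S, (wordFiltration j).map f

variable {S M0}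

@[simp]
theorem wordFiltration_zero : wordFiltration S M0 0 = M0 := rfl

theorem wordFiltration_succ_le_iff {j : ℕ} {B : Submodule K M} :
    wordFiltration S M0 (j + 1) ≤ B ↔
      wordFiltration S M0 j ≤ B ∧ ∀ f ∈ S, ∀ u ∈ wordFiltration S M0 j, f u ∈ B := by
  simp only [wordFiltration, sup_le_iff, iSup₂_le_iff, Submodule.map_le_iff_le_comap]
  rfl

theorem wordFiltration_le_succ (j : ℕ) :
    wordFiltration S M0 j ≤ wordFiltration S M0 (j + 1) :=
  (wordFiltration_succ_le_iff.mp le_rfl).1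

theorem wordFiltration_mono : Monotone (wordFiltration S M0) :=
  monotone_nat_of_le_succ wordFiltration_le_succ

theorem apply_mem_wordFiltration_succ {f : Module.End K M} (hf : f ∈ S) {j : ℕ} {u : M}
    (hu : u ∈ wordFiltration S M0 j) : f u ∈ wordFiltration S M0 (j + 1) :=
  (wordFiltration_succ_le_iff.mp le_rfl).2 f hf u hu

theorem wordFiltration_mono_set {T : Set (Module.End K M)} (hST : S ⊆ T) :
    ∀ j, wordFiltration S M0 j ≤ wordFiltration T M0 j
  | 0 => le_rfl
  | j + 1 => wordFiltration_succ_le_iff.mpr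
      ⟨(wordFiltration_mono_set hST j).trans (wordFiltration_le_succ j),
        fun _ hf _ hu => apply_mem_wordFiltration_succ (hST hf) (wordFiltration_mono_set hST j hu)⟩

theorem foldr_mem_wordFiltration {l : List (Module.End K M)} (hl : ∀ f ∈ l, f ∈ S) {x : M}
    (hx : x ∈ M0) : l.foldr (fun f z => f z) x ∈ wordFiltration S M0 l.length := by
  induction l with
  | nil => exact hx
  | cons f l ih =>
    exact apply_mem_wordFiltration_succ (hl f List.mem_cons_self)
      (ih fun g hg => hl g (List.mem_cons_of_mem f hg))

theorem apply_apply_eq_of_lie_eq {P f g : Module.End K M} (h : ⁅P, f⁆ = g) (u : M) :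
    P (f u) = f (P u) + g u := by
  rw [← sub_eq_iff_eq_add', ← h]
  rfl

theorem wordFiltration_succ_le_comap {P : Module.End K M} (hP0 : ∀ x ∈ M0, P x = 0)
    (hPS : ∀ f ∈ S, ∃ c : K, ⁅P, f⁆ = c • 1) (j : ℕ) :
    wordFiltration S M0 (j + 1) ≤ (wordFiltration S M0 j).comap P := by
  induction j with
  | zero =>
    refine wordFiltration_succ_le_iff.mpr ⟨fun x hx => ?_, fun f hf u hu => ?_⟩
    · simp [hP0 x hx]
    · obtain ⟨c, hc⟩ := hPS f hf
      simpa [apply_apply_eq_of_lie_eq hc, hP0 u hu] using M0.smul_mem c hu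
  | succ j ih =>
    refine wordFiltration_succ_le_iff.mpr
      ⟨ih.trans (Submodule.comap_mono (wordFiltration_le_succ j)), fun f hf u hu => ?_⟩
    obtain ⟨c, hc⟩ := hPS f hf
    rw [Submodule.mem_comap, apply_apply_eq_of_lie_eq hc]
    exact add_mem (apply_mem_wordFiltration_succ hf (ih hu)) (Submodule.smul_mem _ c hu)

theorem exists_ne_zero_forall_apply_eq_zero (A : Set (Module.End K M))
    (hA0 : ∀ P ∈ A, ∀ x ∈ M0, P x = 0) (hAS : ∀ P ∈ A, ∀ f ∈ S, ∃ c : K, ⁅P, f⁆ = c • 1)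
    {N' : Submodule K M} (hN' : ∀ P ∈ A, ∀ x ∈ N', P x ∈ N') {j : ℕ} {v : M} (hvN : v ∈ N')
    (hv : v ∈ wordFiltration S M0 j) (hv0 : v ≠ 0) :
    ∃ u ∈ N', u ∈ wordFiltration S M0 j ∧ u ≠ 0 ∧ ∀ P ∈ A, P u = 0 := by
  induction j generalizing v with
  | zero => exact ⟨v, hvN, hv, hv0, fun P hP => hA0 P hP v hv⟩
  | succ j ih =>
    by_cases hann : ∀ P ∈ A, P v = 0
    · exact ⟨v, hvN, hv, hv0, hann⟩
    push Not at hann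
    obtain ⟨P, hP, hPv⟩ := hann
    obtain ⟨u, huN, hu, hu0, hAu⟩ :=
      ih (hN' P hP v hvN) (wordFiltration_succ_le_comap (hA0 P hP) (hAS P hP) j hv) hPv
    exact ⟨u, huN, wordFiltration_le_succ j hu, hu0, hAu⟩

variable {E : Module.End K M}

theorem apply_mem_eigenspace_add_one {f : Module.End K M} (hf : ⁅E, f⁆ = f) {μ : K} {x : M}
    (hx : x ∈ E.eigenspace μ) : f x ∈ E.eigenspace (μ + 1) := by
  rw [Module.End.mem_eigenspace_iff] at hx ⊢
  rw [apply_apply_eq_of_lie_eq hf, hx, map_smul, add_smul, one_smul]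

theorem wordFiltration_le_sup_iSup_eigenspace (hE0 : ∀ x ∈ M0, E x = 0)
    (hES : ∀ f ∈ S, ⁅E, f⁆ = f) (j : ℕ) :
    wordFiltration S M0 j ≤ M0 ⊔ ⨆ m : ℕ, E.eigenspace (m + 1) := by
  induction j with
  | zero => exact le_sup_left
  | succ j ih =>
    refine wordFiltration_succ_le_iff.mpr ⟨ih, fun f hf u hu => le_sup_right (a := M0) ?_⟩
    suffices M0 ⊔ ⨆ m : ℕ, E.eigenspace (m + 1) ≤
        (⨆ m : ℕ, E.eigenspace ((m : K) + 1)).comap f from this (ih hu)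
    refine sup_le (fun x hx => ?_) (iSup_le fun m x hx => ?_)
    · have hx0 : x ∈ E.eigenspace 0 := by simp [hE0 x hx]
      have := apply_mem_eigenspace_add_one (hES f hf) hx0
      exact Submodule.mem_iSup_of_mem 0 (by simpa using this)
    · have := apply_mem_eigenspace_add_one (hES f hf) hx
      exact Submodule.mem_iSup_of_mem (m + 1) (by simpa using this)

theorem mem_of_mem_wordFiltration_of_apply_eq_zero [CharZero K] (hE0 : ∀ x ∈ M0, E x = 0)
    (hES : ∀ f ∈ S, ⁅E, f⁆ = f) {j : ℕ} {v : M} (hv : v ∈ wordFiltration S M0 j)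
    (hEv : E v = 0) : v ∈ M0 := by
  obtain ⟨a, ha, b, hb, rfl⟩ :=
    Submodule.mem_sup.mp (wordFiltration_le_sup_iSup_eigenspace hE0 hES j hv)
  have hb0 : b ∈ E.eigenspace 0 := by
    simpa [Module.End.mem_eigenspace_iff, hE0 a ha] using hEv
  have hdisj : Disjoint (E.eigenspace 0) (⨆ m : ℕ, E.eigenspace ((m : K) + 1)) :=
    (E.eigenspaces_iSupIndep 0).mono_right
      (iSup_le fun m => le_iSup₂_of_le ((m : K) + 1) (Nat.cast_add_one_ne_zero m) le_rfl)
  rw [(Submodule.disjoint_def.mp hdisj) b hb0 hb, add_zero]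
  exact ha

end WordFiltration

theorem mul_lie {A : Type*} [Ring A] (a b c : A) : ⁅a * b, c⁆ = a * ⁅b, c⁆ + ⁅a, c⁆ * b := by
  simp only [Ring.lie_def, mul_sub, sub_mul, mul_assoc]
  abel

attribute [local instance] LieRing.ofAssociativeRing

variable {ι : Type*} (D W : ι → ℤ → Module.End K M)

def creationModes (w : ℕ) : Set (Module.End K M) :=
  {f | ∃ i, ∃ n : ℤ, 0 < n ∧ n ≤ w ∧ (f = D i (-n) ∨ f = W i (-n))}

def annihilationModes (w : ℕ) : Set (Module.End K M) :=
  {P | ∃ i, ∃ n : ℤ, 0 < n ∧ n ≤ w ∧ (P = D i n ∨ P = W i n)}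

noncomputable def numberOp [Fintype ι] (w : ℕ) : Module.End K M :=
  ∑ i, ∑ n ∈ Finset.Icc (1 : ℤ) w, (n : K)⁻¹ • (W i (-n) * D i n + D i (-n) * W i n)

variable {D W}

theorem numberOp_swap [Fintype ι] (w : ℕ) : numberOp (K := K) W D w = numberOp D W w := by
  simp only [numberOp, add_comm]

theorem creationModes_mono : Monotone (creationModes (K := K) (M := M) D W) :=
  fun _ _ hw _ ⟨i, n, hn, hnw, hf⟩ => ⟨i, n, hn, hnw.trans (by exact_mod_cast hw), hf⟩

theorem numberOp_apply_eq_zero [Fintype ι] {w : ℕ} {u : M}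
    (hu : ∀ P ∈ annihilationModes D W w, P u = 0) : numberOp D W w u = 0 := by
  refine (LinearMap.sum_apply _ _ _).trans (Finset.sum_eq_zero fun i _ => ?_)
  refine (LinearMap.sum_apply _ _ _).trans (Finset.sum_eq_zero fun n hn => ?_)
  have hn : 0 < n ∧ n ≤ w := by simp at hn; omega
  simp [hu _ ⟨i, n, hn.1, hn.2, .inl rfl⟩, hu _ ⟨i, n, hn.1, hn.2, .inr rfl⟩]

theorem exists_mem_wordFiltration_creationModes {M0 : Submodule K M} {v : M}
    (hv : v ∈ Submodule.span K {y : M | ∃ (l : List (Module.End K M)) (x : M), x ∈ M0 ∧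
        (∀ f ∈ l, (∃ (i : ι) (n : ℤ), 0 < n ∧ f = D i (-n)) ∨
                  (∃ (i : ι) (n : ℤ), 0 < n ∧ f = W i (-n))) ∧
        y = l.foldr (fun f z => f z) x}) :
    ∃ w j, v ∈ wordFiltration (creationModes D W w) M0 j := by
  classical
  have hdir : Directed (· ≤ ·) fun n => wordFiltration (creationModes D W n) M0 n :=
    Monotone.directed_le fun a b hab =>
      (wordFiltration_mono_set (creationModes_mono hab) a).trans (wordFiltration_mono hab)
  suffices hle : Submodule.span K _ ≤ ⨆ n, wordFiltration (creationModes D W n) M0 n by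
    obtain ⟨n, hn⟩ := (Submodule.mem_iSup_of_directed _ hdir).mp (hle hv)
    exact ⟨n, n, hn⟩
  refine Submodule.span_le.mpr ?_
  rintro _ ⟨l, x, hx, hl, rfl⟩
  obtain ⟨w, hw⟩ : ∃ w, (l.toFinset : Set (Module.End K M)) ⊆ creationModes D W w := by
    refine creationModes_mono.directed_le.exists_mem_subset_of_finset_subset_biUnion ?_
    intro f hf
    rcases hl f (List.mem_toFinset.mp hf) with ⟨i, n, hn, rfl⟩ | ⟨i, n, hn, rfl⟩
    · exact Set.mem_iUnion.mpr ⟨n.toNat, i, n, hn, by omega, .inl rfl⟩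
    · exact Set.mem_iUnion.mpr ⟨n.toNat, i, n, hn, by omega, .inr rfl⟩
  have hword := foldr_mem_wordFiltration (fun f hf => hw (List.mem_toFinset.mpr hf)) hx
  exact Submodule.mem_iSup_of_mem (max w l.length) <|
    wordFiltration_mono_set (creationModes_mono (le_max_left _ _)) _
      (wordFiltration_mono (le_max_right _ _) hword)

variable [DecidableEq ι]

variable (D W) in
structure IsHeisenberg : Prop where
  commute_D : ∀ i j k l, Commute (D i k) (D j l)
  commute_W : ∀ i j k l, Commute (W i k) (W j l)
  lie_D_W : ∀ i j k l, ⁅D i k, W j l⁆ = if i = j ∧ k + l = 0 then (k : K) • 1 else 0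

theorem IsHeisenberg.symm (h : IsHeisenberg D W) : IsHeisenberg W D where
  commute_D := h.commute_W
  commute_W := h.commute_D
  lie_D_W i j k l := by
    rw [← lie_skew, h.lie_D_W j i l k]
    by_cases hij : i = j ∧ k + l = 0
    · obtain ⟨rfl, hkl⟩ := hij
      rw [if_pos ⟨rfl, by omega⟩, if_pos ⟨rfl, hkl⟩, ← neg_smul, ← Int.cast_neg,
        show -l = k by omega]
    · rw [if_neg fun h' => hij ⟨h'.1.symm, by omega⟩, if_neg hij, neg_zero]

theorem IsHeisenberg.exists_lie_eq_smul_one (h : IsHeisenberg D W) {P f : Module.End K M}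
    (hP : ∃ i k, P = D i k ∨ P = W i k) (hf : ∃ j l, f = D j l ∨ f = W j l) :
    ∃ c : K, ⁅P, f⁆ = c • 1 := by
  have lie_D_W : ∀ i j k l, ∃ c : K, ⁅D i k, W j l⁆ = c • 1 := fun i j k l => by
    rw [h.lie_D_W]
    split_ifs
    exacts [⟨_, rfl⟩, ⟨0, (zero_smul K 1).symm⟩]
  obtain ⟨i, k, rfl | rfl⟩ := hP <;> obtain ⟨j, l, rfl | rfl⟩ := hf
  · exact ⟨0, by rw [(h.commute_D i j k l).lie_eq, zero_smul]⟩
  · exact lie_D_W i j k l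
  · obtain ⟨c, hc⟩ := lie_D_W j i l k
    exact ⟨-c, by rw [← lie_skew, hc, neg_smul]⟩
  · exact ⟨0, by rw [(h.commute_W i j k l).lie_eq, zero_smul]⟩

theorem IsHeisenberg.lie_numberOp_summand_W (h : IsHeisenberg D W) (i j : ι) {n m : ℤ}
    (hn : 0 < n) (hm : 0 < m) :
    ⁅W i (-n) * D i n + D i (-n) * W i n, W j (-m)⁆ =
      if i = j ∧ n = m then (m : K) • W j (-m) else 0 := by
  rw [add_lie, mul_lie, mul_lie, h.lie_D_W, h.lie_D_W, (h.commute_W i j (-n) (-m)).lie_eq,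
    (h.commute_W i j n (-m)).lie_eq,
    if_neg (show ¬(i = j ∧ -n + -m = 0) from fun hc => absurd hc.2 (by omega))]
  by_cases hc : i = j ∧ n = m
  · obtain ⟨rfl, rfl⟩ := hc
    simp
  · rw [if_neg fun hc' => hc ⟨hc'.1, by omega⟩, if_neg hc]
    simp

theorem IsHeisenberg.lie_numberOp_W [CharZero K] [Fintype ι] (h : IsHeisenberg D W) {w : ℕ}
    (j : ι) {m : ℤ} (hm : 0 < m) (hmw : m ≤ w) : ⁅numberOp D W w, W j (-m)⁆ = W j (-m) := by
  have hterm : ∀ i, ∀ n ∈ Finset.Icc (1 : ℤ) w,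
      ⁅(n : K)⁻¹ • (W i (-n) * D i n + D i (-n) * W i n), W j (-m)⁆ =
        if i = j ∧ n = m then W j (-m) else 0 := fun i n hn => by
    rw [smul_lie, h.lie_numberOp_summand_W i j (by simp at hn; omega) hm]
    split_ifs with hc
    · rw [hc.2, smul_smul, inv_mul_cancel₀ (Int.cast_ne_zero.mpr hm.ne'), one_smul]
    · exact smul_zero _
  simp only [numberOp, sum_lie]
  rw [Finset.sum_congr rfl fun i _ => Finset.sum_congr rfl (hterm i)]
  simp [ite_and, Finset.sum_ite_eq', hmw, show 1 ≤ m by omega]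

theorem IsHeisenberg.lie_numberOp_of_mem_creationModes [CharZero K] [Fintype ι]
    (h : IsHeisenberg D W) {w : ℕ} {f : Module.End K M} (hf : f ∈ creationModes D W w) :
    ⁅numberOp D W w, f⁆ = f := by
  obtain ⟨j, m, hm, hmw, rfl | rfl⟩ := hf
  · rw [← numberOp_swap]
    exact h.symm.lie_numberOp_W j hm hmw
  · exact h.lie_numberOp_W j hm hmw

end HeisenbergFock

open HeisenbergFock

theorem tcdo_submodule_meets_top_general (N : ℕ)
    (M : Type) [AddCommGroup M] [Module ℂ M]
    (D W : Fin N → ℤ → Module.End ℂ M)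
    (hDD : ∀ (i j : Fin N) (k l : ℤ) (x : M), D i k (D j l x) = D j l (D i k x))
    (hWW : ∀ (i j : Fin N) (k l : ℤ) (x : M), W i k (W j l x) = W j l (W i k x))
    (hDW : ∀ (i j : Fin N) (k l : ℤ) (x : M),
      D i k (W j l x) - W j l (D i k x) = if i = j ∧ k + l = 0 then (k : ℂ) • x else 0)
    (M0 : Submodule ℂ M)
    (hD0 : ∀ (i : Fin N) (k : ℤ), 0 < k → ∀ x ∈ M0, D i k x = 0)
    (hW0 : ∀ (i : Fin N) (k : ℤ), 0 < k → ∀ x ∈ M0, W i k x = 0)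
    (hspan : Submodule.span ℂ {y : M | ∃ (l : List (Module.End ℂ M)) (x : M), x ∈ M0 ∧
        (∀ f ∈ l, (∃ (i : Fin N) (n : ℤ), 0 < n ∧ f = D i (-n)) ∨
                  (∃ (i : Fin N) (n : ℤ), 0 < n ∧ f = W i (-n))) ∧
        y = l.foldr (fun f z => f z) x} = ⊤)
    (N' : Submodule ℂ M) (hne : N' ≠ ⊥)
    (hstab : ∀ (i : Fin N) (k : ℤ), ∀ x ∈ N', D i k x ∈ N' ∧ W i k x ∈ N') :
    N' ⊓ M0 ≠ ⊥ := by
  have hH : IsHeisenberg D W :=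
    ⟨fun i j k l => LinearMap.ext (hDD i j k l), fun i j k l => LinearMap.ext (hWW i j k l),
      fun i j k l => LinearMap.ext fun x => by
        rw [Ring.lie_def, LinearMap.sub_apply, Module.End.mul_apply, Module.End.mul_apply, hDW]
        split_ifs <;> simp⟩
  obtain ⟨v, hvN, hv0⟩ := (Submodule.ne_bot_iff N').mp hne
  obtain ⟨w, j, hv⟩ :=
    exists_mem_wordFiltration_creationModes (hspan ▸ Submodule.mem_top (x := v))
  have hann0 : ∀ P ∈ annihilationModes D W w, ∀ x ∈ M0, P x = 0 := by
    rintro P ⟨i, n, hn, -, rfl | rfl⟩ x hx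
    exacts [hD0 i n hn x hx, hW0 i n hn x hx]
  obtain ⟨u, huN, hu, hu0, hann⟩ := exists_ne_zero_forall_apply_eq_zero _ hann0
    (by
      rintro P ⟨i, n, -, -, hP⟩ f ⟨j, m, -, -, hf⟩
      exact hH.exists_lie_eq_smul_one ⟨i, n, hP⟩ ⟨j, -m, hf⟩)
    (by rintro P ⟨i, n, -, -, rfl | rfl⟩ x hx; exacts [(hstab i n x hx).1, (hstab i n x hx).2])
    hvN hv hv0
  have huM0 : u ∈ M0 := mem_of_mem_wordFiltration_of_apply_eq_zero
    (fun x hx => numberOp_apply_eq_zero fun P hP => hann0 P hP x hx)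
    (fun f hf => hH.lie_numberOp_of_mem_creationModes hf) hu (numberOp_apply_eq_zero hann)
  exact (Submodule.ne_bot_iff _).mpr ⟨u, Submodule.mem_inf.mpr ⟨huN, huM0⟩, hu0⟩

/-- **Statement 17.** Every nonzero submodule of a filtered module over the algebra of twisted
chiral differential operators on a chiralization-suitable affine chart meets the generating
subspace `M₀` nontrivially: if the modes `∂_{i,k}`, `ω_{i,k}` satisfy the Heisenberg relations,
positive modes kill `M₀`, `M` is generated from `M₀` by the lowering operators, and `N' ⊆ M` is
a nonzero subspace stable under all the operators, then `N' ∩ M₀ ≠ 0`. -/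
theorem tcdo_submodule_meets_top (N : ℕ) (hN : 1 ≤ N)
    (M : Type) [AddCommGroup M] [Module ℂ M]
    (D W : Fin N → ℤ → Module.End ℂ M)
    (hDD : ∀ (i j : Fin N) (k l : ℤ) (x : M), D i k (D j l x) = D j l (D i k x))
    (hWW : ∀ (i j : Fin N) (k l : ℤ) (x : M), W i k (W j l x) = W j l (W i k x))
    (hDW : ∀ (i j : Fin N) (k l : ℤ) (x : M),
      D i k (W j l x) - W j l (D i k x) = if i = j ∧ k + l = 0 then (k : ℂ) • x else 0)
    (M0 : Submodule ℂ M)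
    (hD0 : ∀ (i : Fin N) (k : ℤ), 0 < k → ∀ x ∈ M0, D i k x = 0)
    (hW0 : ∀ (i : Fin N) (k : ℤ), 0 < k → ∀ x ∈ M0, W i k x = 0)
    (hspan : Submodule.span ℂ {y : M | ∃ (l : List (Module.End ℂ M)) (x : M), x ∈ M0 ∧
        (∀ f ∈ l, (∃ (i : Fin N) (n : ℤ), 0 < n ∧ f = D i (-n)) ∨
                  (∃ (i : Fin N) (n : ℤ), 0 < n ∧ f = W i (-n))) ∧
        y = l.foldr (fun f z => f z) x} = ⊤)
    (N' : Submodule ℂ M) (hne : N' ≠ ⊥)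
    (hstab : ∀ (i : Fin N) (k : ℤ), ∀ x ∈ N', D i k x ∈ N' ∧ W i k x ∈ N') :
    N' ⊓ M0 ≠ ⊥ :=
  tcdo_submodule_meets_top_general N M D W hDD hWW hDW M0 hD0 hW0 hspan N' hne hstab
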